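/- Let T, L, P > 0 and let (n_m, h^{(m)}, t^{(m)}, ρ^{(m)}, k_m)_{m∈ℕ} be a refinement sequence. Then lim_{m→∞} ΔE(h^{(m)}, t^{(m)}, ρ^{(m)}; k_m) = 0, lim_{m→∞} ρ^{(m)}_{k_m} = 0, and the subsequence of values h^{(m)}_{k_m} over those m with k_m ≠ 0 converges to 0. -/

import Mathlib

noncomputable section

/-- The local error term `𝓔_j(h,t,ρ)` of the Euler scheme error bound:
`𝓔_0 = e^{LT} ρ_0/2` and `𝓔_j = e^{L(T-t_j)}(e^{L h_j}-1)(P h_j + ρ_j/2 + ρ_j/(2 L h_j))`. -/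
def calE (T L P : ℝ) (h t ρ : ℕ → ℝ) (j : ℕ) : ℝ :=
  if j = 0 then Real.exp (L * T) * ρ 0 / 2
  else Real.exp (L * (T - t j)) * (Real.exp (L * h j) - 1) *
    (P * h j + ρ j / 2 + ρ j / (2 * L * h j))

/-- The error bound `E(h,t,ρ) = ∑_{j=0}^n 𝓔_j(h,t,ρ)` for a discretization of length `n`. -/
def Ebound (T L P : ℝ) (n : ℕ) (h t ρ : ℕ → ℝ) : ℝ :=
  ∑ j ∈ Finset.range (n + 1), calE T L P h t ρ j

/-- The `h`-component of the subdivision rule `ψ[h,t,ρ;k]`: for `k = 0` the step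
sizes are unchanged, for `k ∈ [1,n]` the entry `h_k` is replaced by the two
entries `h_k/2, h_k/2` and later entries are shifted. -/
def psiH (h : ℕ → ℝ) (k : ℕ) : ℕ → ℝ := fun j =>
  if k = 0 then h j
  else if j < k then h j
  else if j ≤ k + 1 then h k / 2
  else h (j - 1)

/-- The `t`-component of the subdivision rule `ψ[h,t,ρ;k]`: for `k = 0` the nodes
are unchanged, for `k ∈ [1,n]` the node `t_k - h_k/2` is inserted between
`t_{k-1}` and `t_k`. -/
def psiT (h t : ℕ → ℝ) (k : ℕ) : ℕ → ℝ := fun j =>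
  if k = 0 then t j
  else if j < k then t j
  else if j = k then t k - h k / 2
  else t (j - 1)

/-- The `ρ`-component of the subdivision rule `ψ[h,t,ρ;k]`: for `k = 0` the entry
`ρ_0` is replaced by `ρ_0/4`, for `k ∈ [1,n]` the entry `ρ_k` is replaced by the
two entries `ρ_k/4, ρ_k/4` and later entries are shifted. -/
def psiRho (ρ : ℕ → ℝ) (k : ℕ) : ℕ → ℝ := fun j =>
  if k = 0 then (if j = 0 then ρ 0 / 4 else ρ j)
  else if j < k then ρ j
  else if j ≤ k + 1 then ρ k / 4
  else ρ (j - 1)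

/-- The length of the discretization produced by `ψ[h,t,ρ;k]` from one of length `n`:
`n` if `k = 0`, and `n + 1` otherwise. -/
def newn (n k : ℕ) : ℕ := if k = 0 then n else n + 1

/-- `ΔE(h,t,ρ;k) = E(ψ[h,t,ρ;k]) - E(h,t,ρ)`. -/
def deltaE (T L P : ℝ) (n : ℕ) (h t ρ : ℕ → ℝ) (k : ℕ) : ℝ :=
  Ebound T L P (newn n k) (psiH h k) (psiT h t k) (psiRho ρ k) - Ebound T L P n h t ρ

/-- The cost estimator `C(h,t,ρ) = ∑_{j=0}^{n-1} (v_R(t_j)/ρ_j^{d_R}) ·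
(v_F(t_j) h_{j+1}^{d_F} / ρ_{j+1}^{d_F})`. -/
def costC (dR dF : ℕ) (vR vF : ℝ → ℝ) (n : ℕ) (h t ρ : ℕ → ℝ) : ℝ :=
  ∑ j ∈ Finset.range n,
    (vR (t j) / ρ j ^ dR) * (vF (t j) * h (j + 1) ^ dF / ρ (j + 1) ^ dF)

/-- `ΔC(h,t,ρ;k) = C(ψ[h,t,ρ;k]) - C(h,t,ρ)`. -/
def deltaC (dR dF : ℕ) (vR vF : ℝ → ℝ) (n : ℕ) (h t ρ : ℕ → ℝ) (k : ℕ) : ℝ :=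
  costC dR dF vR vF (newn n k) (psiH h k) (psiT h t k) (psiRho ρ k) -
    costC dR dF vR vF n h t ρ

/-- A refinement sequence `(n_m, h^{(m)}, t^{(m)}, ρ^{(m)}, k_m)` as generated by the
iterative refinement algorithm: it starts from the trivial discretization
`n_0 = 1`, `h^{(0)} = (T)`, `t^{(0)} = (0,T)`, `ρ^{(0)} = (2LPT², 2LPT²)`, and in each
step applies the subdivision rule `ψ` at the index `k_m ∈ [0, n_m]`. -/
def RefinementSeq (T L P : ℝ) (n : ℕ → ℕ) (h t ρ : ℕ → ℕ → ℝ) (k : ℕ → ℕ) : Prop :=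
  n 0 = 1 ∧ h 0 1 = T ∧ t 0 0 = 0 ∧ t 0 1 = T ∧
    ρ 0 0 = 2 * L * P * T ^ 2 ∧ ρ 0 1 = 2 * L * P * T ^ 2 ∧
    (∀ m, k m ≤ n m) ∧
    (∀ m, h (m + 1) = psiH (h m) (k m)) ∧
    (∀ m, t (m + 1) = psiT (h m) (t m) (k m)) ∧
    (∀ m, ρ (m + 1) = psiRho (ρ m) (k m)) ∧
    (∀ m, n (m + 1) = newn (n m) (k m))

lemma deltaE_zero (T L P : ℝ) (n : ℕ) (h t ρ : ℕ → ℝ) :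
    deltaE T L P n h t ρ 0 = -(3 * Real.exp (L * T) * ρ 0 / 8) := by
  unfold deltaE Ebound newn
  rw [if_pos rfl, ← Finset.sum_sub_distrib, Finset.sum_eq_single 0]
  · simp [calE, psiRho]; ring
  · intro j _ hj0
    simp [calE, psiH, psiT, psiRho, hj0]
  · intro h0; exact absurd (Finset.mem_range.mpr (Nat.succ_pos n)) h0

lemma deltaE_succ (T L P : ℝ) (hL : 0 < L) (n : ℕ) (h t ρ : ℕ → ℝ) (k : ℕ)
    (hk : k ≠ 0) (hkn : k ≤ n) (hh : h k ≠ 0) :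
    deltaE T L P n h t ρ k =
      -(Real.exp (L * (T - t k)) * (Real.exp (L * h k) - 1) *
        (P * h k / 2 + 3 * ρ k / 8 + ρ k / (4 * L * h k))) := by
  have hnewn : newn n k = n + 1 := if_neg hk
  set f' := calE T L P (psiH h k) (psiT h t k) (psiRho ρ k) with hf'
  set f := calE T L P h t ρ with hf
  have split1 : ∑ j ∈ Finset.range (n+1+1), f' j
      = (∑ j ∈ Finset.range (k+2), f' j) + ∑ i ∈ Finset.range (n - k), f' (k+2+i) := by
    rw [Finset.range_eq_Ico,
      ← Finset.sum_Ico_consecutive f' (Nat.zero_le (k+2)) (by omega : k+2 ≤ n+1+1),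
      ← Finset.range_eq_Ico, Finset.sum_Ico_eq_sum_range,
      (by omega : n+1+1 - (k+2) = n - k)]
  have split2 : ∑ j ∈ Finset.range (n+1), f j
      = (∑ j ∈ Finset.range (k+1), f j) + ∑ i ∈ Finset.range (n - k), f (k+1+i) := by
    rw [Finset.range_eq_Ico,
      ← Finset.sum_Ico_consecutive f (Nat.zero_le (k+1)) (by omega : k+1 ≤ n+1),
      ← Finset.range_eq_Ico, Finset.sum_Ico_eq_sum_range,
      (by omega : n+1 - (k+1) = n - k)]
  have tail : ∀ i : ℕ, f' (k+2+i) = f (k+1+i) := by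
    intro i
    have h1 : ¬ (k+2+i < k) := by omega
    have h2 : ¬ (k+2+i ≤ k+1) := by omega
    have h3 : k+2+i ≠ k := by omega
    have h4 : k+2+i - 1 = k+1+i := by omega
    have h5 : k+2+i ≠ 0 := by omega
    have h6 : k+1+i ≠ 0 := by omega
    simp [hf', hf, calE, psiH, psiT, psiRho, hk, h1, h2, h3, h4, h5, h6]
  have head : ∀ j ∈ Finset.range k, f' j = f j := by
    intro j hj
    have hjk : j < k := Finset.mem_range.mp hj
    by_cases hj0 : j = 0
    · subst hj0
      simp [hf', hf, calE, psiRho, hk, hjk, Nat.pos_of_ne_zero hk]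
    · simp [hf', hf, calE, psiH, psiT, psiRho, hk, hjk, hj0]
  have hred : deltaE T L P n h t ρ k = f' k + f' (k+1) - f k := by
    unfold deltaE Ebound
    rw [hnewn, ← hf', ← hf, split1, split2]
    rw [Finset.sum_range_succ, Finset.sum_range_succ (f := f'), Finset.sum_range_succ (f := f)]
    rw [Finset.sum_congr rfl head, Finset.sum_congr rfl (fun i _ => tail i)]
    ring
  rw [hred]
  -- now compute the three terms
  have hklt : ¬ (k < k) := lt_irrefl k
  have hk1lt : ¬ (k+1 < k) := by omega
  have hk1ne : k+1 ≠ k := by omega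
  have hk1ne0 : k+1 ≠ 0 := by omega
  have hfk : f k = Real.exp (L * (T - t k)) * (Real.exp (L * h k) - 1) *
      (P * h k + ρ k / 2 + ρ k / (2 * L * h k)) := by
    simp [hf, calE, hk]
  have hf'k : f' k = Real.exp (L * (T - (t k - h k / 2))) * (Real.exp (L * (h k / 2)) - 1) *
      (P * (h k / 2) + (ρ k / 4) / 2 + (ρ k / 4) / (2 * L * (h k / 2))) := by
    simp [hf', calE, psiH, psiT, psiRho, hk, hklt, le_refl]
  have hf'k1 : f' (k+1) = Real.exp (L * (T - t k)) * (Real.exp (L * (h k / 2)) - 1) *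
      (P * (h k / 2) + (ρ k / 4) / 2 + (ρ k / 4) / (2 * L * (h k / 2))) := by
    simp [hf', calE, psiH, psiT, psiRho, hk, hk1lt, hk1ne, hk1ne0, le_refl]
  rw [hfk, hf'k, hf'k1]
  have e1 : Real.exp (L * (T - (t k - h k / 2)))
      = Real.exp (L * (T - t k)) * Real.exp (L * (h k / 2)) := by
    rw [← Real.exp_add]; ring_nf
  have e2 : Real.exp (L * h k) = Real.exp (L * (h k / 2)) * Real.exp (L * (h k / 2)) := by
    rw [← Real.exp_add]; ring_nf
  rw [e1, e2]
  have hLne : L ≠ 0 := hL.ne'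
  field_simp
  ring

theorem stmt_11 (T L P : ℝ) (hT : 0 < T) (hL : 0 < L) (hP : 0 < P)
    (n : ℕ → ℕ) (h t ρ : ℕ → ℕ → ℝ) (k : ℕ → ℕ)
    (href : RefinementSeq T L P n h t ρ k) :
    Filter.Tendsto (fun m => deltaE T L P (n m) (h m) (t m) (ρ m) (k m))
        Filter.atTop (nhds 0) ∧
      Filter.Tendsto (fun m => ρ m (k m)) Filter.atTop (nhds 0) ∧
      Filter.Tendsto (fun m => h m (k m))
        (Filter.atTop ⊓ Filter.principal {m | k m ≠ 0}) (nhds 0) := by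
  obtain ⟨hn0, hh01, ht00, ht01, hr00, hr01, hkn, hH, hT', hRho, hN⟩ := href
  -- invariants
  have inv : ∀ m, (∀ j, j ≤ n m → 0 < ρ m j) ∧ (∀ j, 1 ≤ j → j ≤ n m → 0 < h m j) ∧
      (∀ j, j ≤ n m → t m j ≤ T) := by
    intro m
    induction m with
    | zero =>
      refine ⟨?_, ?_, ?_⟩
      · intro j hj; rw [hn0] at hj; interval_cases j
        · rw [hr00]; positivity
        · rw [hr01]; positivity
      · intro j h1 hj; rw [hn0] at hj; interval_cases j
        rw [hh01]; exact hT
      · intro j hj; rw [hn0] at hj; interval_cases j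
        · rw [ht00]; exact hT.le
        · rw [ht01]
    | succ m ih =>
      obtain ⟨ihρ, ihh, iht⟩ := ih
      rw [hRho m, hH m, hT' m, hN m]
      by_cases hk0 : k m = 0
      · refine ⟨?_, ?_, ?_⟩
        · intro j hj
          rw [newn, if_pos hk0] at hj
          simp only [psiRho, if_pos hk0]
          by_cases hj0 : j = 0
          · have := ihρ 0 (Nat.zero_le _); simp [hj0]; positivity
          · simp only [if_neg hj0]; exact ihρ j hj
        · intro j h1 hj; rw [newn, if_pos hk0] at hj
          simpa [psiH, hk0] using ihh j h1 hj
        · intro j hj; rw [newn, if_pos hk0] at hj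
          simpa [psiT, hk0] using iht j hj
      · have hkm := hkn m
        have hk1 : 1 ≤ k m := Nat.one_le_iff_ne_zero.mpr hk0
        refine ⟨?_, ?_, ?_⟩
        · intro j hj
          rw [newn, if_neg hk0] at hj
          simp only [psiRho, if_neg hk0]
          split_ifs with c1 c2
          · exact ihρ j (by omega)
          · have := ihρ (k m) hkm; positivity
          · exact ihρ (j-1) (by omega)
        · intro j h1 hj
          rw [newn, if_neg hk0] at hj
          simp only [psiH, if_neg hk0]
          split_ifs with c1 c2
          · exact ihh j h1 (by omega)
          · have := ihh (k m) hk1 hkm; positivity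
          · exact ihh (j-1) (by omega) (by omega)
        · intro j hj
          rw [newn, if_neg hk0] at hj
          simp only [psiT, if_neg hk0]
          split_ifs with c1 c2
          · exact iht j (by omega)
          · have h1 := ihh (k m) hk1 hkm
            have h2 := iht (k m) hkm
            linarith
          · exact iht (j-1) (by omega)
  set Em : ℕ → ℝ := fun m => Ebound T L P (n m) (h m) (t m) (ρ m) with hEm
  set D : ℕ → ℝ := fun m => deltaE T L P (n m) (h m) (t m) (ρ m) (k m) with hDdef
  have hDE : ∀ m, D m = Em (m+1) - Em m := by
    intro m
    simp only [hDdef, hEm]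
    rw [hH m, hT' m, hRho m, hN m]
    rfl
  -- per-step bounds
  have bounds : ∀ m, D m ≤ 0 ∧ ρ m (k m) ≤ 4 * (-D m) ∧
      (k m ≠ 0 → L * P / 2 * (h m (k m)) ^ 2 ≤ -D m) := by
    intro m
    obtain ⟨ihρ, ihh, iht⟩ := inv m
    by_cases hk0 : k m = 0
    · have hρ0 : 0 < ρ m 0 := ihρ 0 (Nat.zero_le _)
      have hexp : 1 ≤ Real.exp (L * T) := Real.one_le_exp (by positivity)
      have hDf : D m = -(3 * Real.exp (L * T) * ρ m 0 / 8) := by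
        rw [hDdef]; simp only; rw [hk0, deltaE_zero]
      refine ⟨?_, ?_, fun hc => absurd hk0 hc⟩
      · rw [hDf]; nlinarith
      · rw [hDf, hk0]; nlinarith
    · have hkm := hkn m
      have hk1 : 1 ≤ k m := Nat.one_le_iff_ne_zero.mpr hk0
      have hhk : 0 < h m (k m) := ihh _ hk1 hkm
      have htk : t m (k m) ≤ T := iht _ hkm
      have hρk : 0 < ρ m (k m) := ihρ _ hkm
      set x := h m (k m) with hx'
      set r := ρ m (k m) with hr'
      set A := Real.exp (L * (T - t m (k m))) with hA'
      set E := Real.exp (L * x) - 1 with hE'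
      have hDf : D m = -(A * E * (P * x / 2 + 3 * r / 8 + r / (4 * L * x))) :=
        deltaE_succ T L P hL (n m) (h m) (t m) (ρ m) (k m) hk0 hkm hhk.ne'
      have hApos : (0:ℝ) < A := Real.exp_pos _
      have hA1 : 1 ≤ A := Real.one_le_exp (by nlinarith)
      have hxE : L * x ≤ E := by
        have := Real.add_one_le_exp (L * x); rw [hE']; linarith
      have hxpos : 0 < L * x := by positivity
      have hEpos : 0 < E := lt_of_lt_of_le hxpos hxE
      have hQpos : 0 < P * x / 2 + 3 * r / 8 + r / (4 * L * x) := by positivity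
      have hrq : r / 4 ≤ E * (r / (4 * L * x)) := by
        have c2 : (L * x) * (r / (4 * L * x)) = r / 4 := by
          field_simp
        rw [← c2]
        exact mul_le_mul_of_nonneg_right hxE (by positivity)
      have hEQ1 : E * (r / (4 * L * x)) ≤ E * (P * x / 2 + 3 * r / 8 + r / (4 * L * x)) := by
        apply mul_le_mul_of_nonneg_left _ hEpos.le
        have : (0:ℝ) ≤ P * x / 2 + 3 * r / 8 := by positivity
        linarith
      have hhq : L * P / 2 * x ^ 2 ≤ E * (P * x / 2) := by
        have c3 : L * P / 2 * x ^ 2 = (L * x) * (P * x / 2) := by ring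
        rw [c3]
        exact mul_le_mul_of_nonneg_right hxE (by positivity)
      have hEQ2 : E * (P * x / 2) ≤ E * (P * x / 2 + 3 * r / 8 + r / (4 * L * x)) := by
        apply mul_le_mul_of_nonneg_left _ hEpos.le
        have : (0:ℝ) ≤ 3 * r / 8 + r / (4 * L * x) := by positivity
        linarith
      have hAEQ : E * (P * x / 2 + 3 * r / 8 + r / (4 * L * x))
          ≤ A * E * (P * x / 2 + 3 * r / 8 + r / (4 * L * x)) := by
        have := mul_le_mul_of_nonneg_right hA1 (mul_pos hEpos hQpos).le
        calc E * (P * x / 2 + 3 * r / 8 + r / (4 * L * x))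
            = 1 * (E * (P * x / 2 + 3 * r / 8 + r / (4 * L * x))) := by ring
          _ ≤ A * (E * (P * x / 2 + 3 * r / 8 + r / (4 * L * x))) := this
          _ = A * E * (P * x / 2 + 3 * r / 8 + r / (4 * L * x)) := by ring
      refine ⟨?_, ?_, fun _ => ?_⟩
      · rw [hDf]
        have := mul_pos (mul_pos hApos hEpos) hQpos
        linarith
      · rw [hDf]; linarith
      · rw [hDf]; linarith
  -- E is nonnegative
  have hEnonneg : ∀ m, 0 ≤ Em m := by
    intro m
    obtain ⟨ihρ, ihh, _⟩ := inv m
    apply Finset.sum_nonneg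
    intro j hj
    rw [Finset.mem_range] at hj
    by_cases hj0 : j = 0
    · have := ihρ 0 (Nat.zero_le _)
      simp only [calE, hj0, if_pos rfl]
      exact div_nonneg (mul_nonneg (Real.exp_pos _).le this.le) (by norm_num)
    · simp only [calE, if_neg hj0]
      have hhj : 0 < h m j := ihh j (Nat.one_le_iff_ne_zero.mpr hj0) (by omega)
      have hρj : 0 < ρ m j := ihρ j (by omega)
      have hE : 0 ≤ Real.exp (L * h m j) - 1 := by
        have := Real.add_one_le_exp (L * h m j)
        nlinarith
      apply mul_nonneg (mul_nonneg (Real.exp_pos _).le hE)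
      have h2 : (0:ℝ) < 2 * L * h m j := by
        have : (0:ℝ) < 2 * L := by linarith
        exact mul_pos this hhj
      have h3 := div_pos hρj h2
      have h4 := mul_pos hP hhj
      linarith
  have hmono : ∀ m, Em (m+1) ≤ Em m := by
    intro m
    have h1 := (bounds m).1
    rw [hDE m] at h1
    linarith
  have hbdd : BddBelow (Set.range Em) := by
    refine ⟨0, ?_⟩
    rintro x ⟨m, rfl⟩
    exact hEnonneg m
  have hconv : Filter.Tendsto Em Filter.atTop (nhds (⨅ m, Em m)) :=
    tendsto_atTop_ciInf (antitone_nat_of_succ_le hmono) hbdd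
  have hD0 : Filter.Tendsto D Filter.atTop (nhds 0) := by
    have h1 : Filter.Tendsto (fun m => Em (m+1)) Filter.atTop (nhds (⨅ m, Em m)) :=
      hconv.comp (Filter.tendsto_add_atTop_nat 1)
    have h2 := h1.sub hconv
    rw [sub_self] at h2
    exact Filter.Tendsto.congr (fun m => (hDE m).symm) h2
  refine ⟨hD0, ?_, ?_⟩
  · apply squeeze_zero (fun m => ((inv m).1 (k m) (hkn m)).le) (fun m => (bounds m).2.1)
    have := hD0.neg.const_mul (4:ℝ)
    simpa using this
  · have hLP : (0:ℝ) < L * P := by positivity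
    have hg : Filter.Tendsto (fun m => 2 / (L*P) * (-D m))
        (Filter.atTop ⊓ Filter.principal {m | k m ≠ 0}) (nhds 0) := by
      have h1 := (hD0.neg.const_mul (2/(L*P))).mono_left
        (inf_le_left (a := Filter.atTop) (b := Filter.principal {m | k m ≠ 0}))
      simpa using h1
    have hsq : Filter.Tendsto (fun m => (h m (k m))^2)
        (Filter.atTop ⊓ Filter.principal {m | k m ≠ 0}) (nhds 0) := by
      apply tendsto_of_tendsto_of_tendsto_of_le_of_le' tendsto_const_nhds hg
      · exact Filter.Eventually.of_forall (fun m => sq_nonneg _)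
      · rw [Filter.eventually_inf_principal]
        apply Filter.Eventually.of_forall
        intro m hm
        have hb := (bounds m).2.2 hm
        calc (h m (k m))^2 = 2/(L*P) * (L*P/2 * (h m (k m))^2) := by field_simp
          _ ≤ 2/(L*P) * (-D m) := by
              apply mul_le_mul_of_nonneg_left hb (by positivity)
    have hsqrt := (Real.continuous_sqrt.tendsto 0).comp hsq
    rw [Real.sqrt_zero] at hsqrt
    refine Filter.Tendsto.congr' ?_ hsqrt
    rw [Filter.eventuallyEq_iff_exists_mem]
    refine ⟨{m | k m ≠ 0}, ?_, ?_⟩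
    · exact Filter.mem_inf_of_right (Filter.mem_principal_self _)
    · intro m hm
      have hk1 : 1 ≤ k m := Nat.one_le_iff_ne_zero.mpr hm
      have hpos : 0 < h m (k m) := (inv m).2.1 (k m) hk1 (hkn m)
      simp only [Function.comp_apply]
      exact Real.sqrt_sq hpos.le
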